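/- arXiv:math-ph/0205039 — 5 statements merged into one kernel-verified Lean document; each statement's English description precedes it below -/
import Mathlib

section
/- For every integer l ≥ 1, the identity ∏_{j=1}^{l} (2j-1)(2j) = 2 · ∏_{j=1}^{l} j(2l-j) holds; equivalently, (2l)! = 2 · l! · (2l-1)!/(l-1)!. (This is the identity ∏_j (d_j-1)d_j = z·∏_k r_k for the root system B_l.) -/
open Finset Nat

theorem Finset.prod_Icc_id_eq_factorial (n : ℕ) : ∏ j ∈ Icc 1 n, j = n ! := by
  rw [← Finset.Ico_add_one_right_eq_Icc, prod_Ico_id_eq_factorial]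

theorem Finset.prod_Icc_two_mul_sub_one_mul_two_mul (n : ℕ) :
    ∏ j ∈ Icc 1 n, (2 * j - 1) * (2 * j) = (2 * n)! := by
  induction n with
  | zero => simp
  | succ n ih =>
    rw [prod_Icc_succ_top (by omega), ih, show 2 * (n + 1) = 2 * n + 1 + 1 by ring,
      factorial_succ, factorial_succ, Nat.add_sub_cancel]
    ring

theorem Finset.prod_Icc_sub_eq_descFactorial (n k : ℕ) :
    ∏ j ∈ Icc 1 k, (n - j) = (n - 1).descFactorial k := by
  rw [← Finset.Ico_add_one_right_eq_Icc, prod_Ico_eq_prod_range, descFactorial_eq_prod_range]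
  refine prod_congr (by simp) fun i _ => ?_
  omega

theorem prod_degrees_eq_center_mul_prod_r_B (l : ℕ) (hl : 1 ≤ l) :
    ∏ j ∈ Finset.Icc 1 l, (2 * j - 1) * (2 * j) =
      2 * ∏ j ∈ Finset.Icc 1 l, j * (2 * l - j) := by
  rw [prod_Icc_two_mul_sub_one_mul_two_mul, prod_mul_distrib, prod_Icc_id_eq_factorial,
    prod_Icc_sub_eq_descFactorial]
  calc (2 * l)! = 2 * l * (2 * l - 1)! := (mul_factorial_pred (by omega)).symm
    _ = 2 * l * ((l - 1)! * (2 * l - 1).descFactorial l) := by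
      rw [← factorial_mul_descFactorial (by omega : l ≤ 2 * l - 1),
        show 2 * l - 1 - l = l - 1 by omega]
    _ = 2 * (l * (l - 1)! * (2 * l - 1).descFactorial l) := by ring
    _ = 2 * (l ! * (2 * l - 1).descFactorial l) := by rw [mul_factorial_pred (by omega)]
end

section
/- For every integer n ≥ 2, Σ_{m=1}^{n-1} 1/sin²(mπ/n) = (n² − 1)/3. -/
/-!
With `ω = exp (2πim/n)` one has `1 / sin² (mπ/n) = -4 ω / (1 - ω)²`. For an `n`-th root of
unity `ω ≠ 1` the function `ω ↦ ω / (1 - ω)²` has the finite Fourier expansion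
`ω / (1 - ω)² = (1 / 2n) ∑_{k<n} k (n - k) ωᵏ`, checked by multiplying out with `(1 - ω)²`.
Summing over `m ∈ [1, n)`, each `ωᵏ` with `0 < k < n` contributes `-1`, so the sum is
`-(1 / 2n) ∑_{k<n} k (n - k) = -(n² - 1) / 12`.
-/

open Finset Complex Real

section CommRing

variable {R : Type*} [CommRing R]

theorem one_sub_mul_sum_range_mul_pow (x : R) (n : ℕ) :
    (1 - x) * ∑ k ∈ range n, (k : R) * x ^ k =
      x * ∑ k ∈ range n, x ^ k - n * x ^ n := by
  induction n with
  | zero => simp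
  | succ n ih => simp only [sum_range_succ, mul_add, ih]; push_cast; ring

theorem one_sub_mul_sum_range_sq_mul_pow (x : R) (n : ℕ) :
    (1 - x) * ∑ k ∈ range n, (k : R) ^ 2 * x ^ k =
      2 * x * ∑ k ∈ range n, (k : R) * x ^ k + x * ∑ k ∈ range n, x ^ k - n ^ 2 * x ^ n := by
  induction n with
  | zero => simp
  | succ n ih => simp only [sum_range_succ, mul_add, ih]; push_cast; ring

theorem sq_one_sub_mul_sum_range_mul_sub_mul_pow {ω : R} {n : ℕ}
    (hω : ∑ k ∈ range n, ω ^ k = 0) :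
    (1 - ω) ^ 2 * ∑ k ∈ range n, (k * (n - k) : R) * ω ^ k = 2 * n * ω := by
  have hpow : ω ^ n = 1 := by
    linear_combination mul_neg_geom_sum ω n - (1 - ω) * hω
  have h1 := one_sub_mul_sum_range_mul_pow ω n
  have h2 := one_sub_mul_sum_range_sq_mul_pow ω n
  rw [hω, hpow] at h1 h2
  have hsplit : ∑ k ∈ range n, (k * (n - k) : R) * ω ^ k =
      n * ∑ k ∈ range n, (k : R) * ω ^ k - ∑ k ∈ range n, (k : R) ^ 2 * ω ^ k := by
    rw [mul_sum, ← sum_sub_distrib]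
    exact sum_congr rfl fun k _ => by ring
  rw [hsplit]
  linear_combination (n * (1 - ω) - 2 * ω) * h1 - (1 - ω) * h2

theorem sum_Ico_one_pow_eq_neg_one {ω : R} {n : ℕ} (hn : n ≠ 0)
    (hω : ∑ k ∈ range n, ω ^ k = 0) : ∑ k ∈ Ico 1 n, ω ^ k = -1 := by
  rw [sum_range_eq_add_Ico _ (Nat.pos_of_ne_zero hn), pow_zero] at hω
  linear_combination hω

theorem sum_range_cast_mul_sub (n : ℕ) :
    6 * ∑ k ∈ range n, (k * (n - k) : R) = (n - 1) * n * (n + 1) := by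
  have sum_id (m : ℕ) : 2 * ∑ k ∈ range m, (k : R) = m * (m - 1) := by
    induction m with
    | zero => simp
    | succ m ih => rw [sum_range_succ, mul_add, ih]; push_cast; ring
  have sum_sq (m : ℕ) : 6 * ∑ k ∈ range m, (k : R) ^ 2 = m * (m - 1) * (2 * m - 1) := by
    induction m with
    | zero => simp
    | succ m ih => rw [sum_range_succ, mul_add, ih]; push_cast; ring
  simp only [mul_sub, sum_sub_distrib, ← sq, ← sum_mul]
  linear_combination 3 * n * sum_id n - sum_sq n

end CommRing

theorem geom_sum_eq_zero_of_pow_eq_one {R : Type*} [CommRing R] [IsDomain R] {ω : R} {n : ℕ}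
    (h1 : ω ≠ 1) (hn : ω ^ n = 1) : ∑ k ∈ range n, ω ^ k = 0 := by
  refine eq_zero_of_ne_zero_of_mul_left_eq_zero (sub_ne_zero_of_ne h1.symm) ?_
  rw [mul_neg_geom_sum, hn, sub_self]

theorem Complex.inv_sin_sq (z : ℂ) :
    (sin z ^ 2)⁻¹ = -4 * (exp (2 * z * I) / (1 - exp (2 * z * I)) ^ 2) := by
  have hu : exp (z * I) ≠ 0 := exp_ne_zero _
  have hsin : sin z = ((exp (z * I))⁻¹ - exp (z * I)) * I / 2 := by
    rw [sin, neg_mul, exp_neg]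
  have hexp : exp (2 * z * I) = exp (z * I) ^ 2 := by
    rw [← exp_nat_mul]; push_cast; ring_nf
  rw [hsin, hexp]
  field_simp
  rw [I_sq]
  ring

theorem IsPrimitiveRoot.sum_Ico_pow_div_one_sub_pow_sq {K : Type*} [Field K] [CharZero K]
    {ζ : K} {n : ℕ} (hζ : IsPrimitiveRoot ζ n) (hn : n ≠ 0) :
    ∑ m ∈ Ico 1 n, ζ ^ m / (1 - ζ ^ m) ^ 2 = -((n : K) ^ 2 - 1) / 12 := by
  have hζ_ne_one {m : ℕ} (hm : m ∈ Ico 1 n) : ζ ^ m ≠ 1 := by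
    rw [mem_Ico] at hm
    exact hζ.pow_ne_one_of_pos_of_lt (by omega) hm.2
  have geom {m : ℕ} (hm : m ∈ Ico 1 n) : ∑ k ∈ range n, (ζ ^ m) ^ k = 0 :=
    geom_sum_eq_zero_of_pow_eq_one (hζ_ne_one hm) (by rw [pow_right_comm, hζ.pow_eq_one, one_pow])
  have fourier : ∀ m ∈ Ico 1 n,
      ζ ^ m / (1 - ζ ^ m) ^ 2 =
        (2 * (n : K))⁻¹ * ∑ k ∈ range n, (k * (n - k) : K) * (ζ ^ k) ^ m := by
    intro m hm
    have h := sq_one_sub_mul_sum_range_mul_sub_mul_pow (geom hm)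
    have hne : 1 - ζ ^ m ≠ 0 := sub_ne_zero.mpr (hζ_ne_one hm).symm
    simp_rw [pow_right_comm ζ _ m]
    field_simp
    linear_combination -h
  have inner : ∀ k ∈ range n,
      (k * (n - k) : K) * ∑ m ∈ Ico 1 n, (ζ ^ k) ^ m = -(k * (n - k)) := by
    intro k hk
    rcases Nat.eq_zero_or_pos k with rfl | hk0
    · simp
    · rw [sum_Ico_one_pow_eq_neg_one hn (geom (mem_Ico.2 ⟨hk0, mem_range.1 hk⟩)), mul_neg_one]
  rw [sum_congr rfl fourier, ← mul_sum, sum_comm]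
  simp_rw [← mul_sum]
  rw [sum_congr rfl inner, sum_neg_distrib]
  have hnK : (n : K) ≠ 0 := Nat.cast_ne_zero.mpr hn
  field_simp
  linear_combination -2 * sum_range_cast_mul_sub (R := K) n

theorem sum_inv_sin_sq (n : ℕ) (hn : 2 ≤ n) :
    ∑ m ∈ Finset.Ico 1 n, 1 / Real.sin (m * Real.pi / n) ^ 2 =
      ((n : ℝ) ^ 2 - 1) / 3 := by
  have hn0 : n ≠ 0 := by omega
  have hexp (m : ℕ) : exp (2 * (m * π / n) * I) = exp (2 * π * I / n) ^ m := by
    rw [← Complex.exp_nat_mul]; ring_nf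
  apply ofReal_injective
  push_cast [ofReal_sin]
  simp_rw [one_div, inv_sin_sq, hexp]
  rw [← mul_sum, (isPrimitiveRoot_exp n hn0).sum_Ico_pow_div_one_sub_pow_sq hn0]
  ring
end

section
/- For all integers n ≥ 2 and 0 ≤ k ≤ n, Σ_{m=1}^{n-1} (1 − cos(2πkm/n)) / sin²(mπ/n) = 2k(n − k). -/
/-!
Write `x = mπ/n`. Since `cos (a + 2x) + cos (a - 2x) - 2 cos a = -4 sin² x cos a`, the second
difference in `k` of the summand is `4 cos (2π(k+1)m/n)`: the `csc²` factor cancels. Summed over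
`m`, these cosines are real parts of the nontrivial `n`-th roots of unity and add up to `-1`, so
the sum has constant second difference `-4` for `k + 2 ≤ n`. Its values at `k = 0` and `k = 1`
(where every summand equals `2`) are `0` and `2(n - 1)`, which pins it down as `2k(n - k)`.
-/

open Finset Real

lemma sum_range_cos_two_pi_mul_div_eq_zero {n j : ℕ} (h : ¬ n ∣ j) :
    ∑ m ∈ range n, cos (2 * π * j * m / n) = 0 := by
  rcases eq_or_ne n 0 with rfl | hn
  · simp
  have hω := Complex.isPrimitiveRoot_exp n hn
  set ω := Complex.exp (2 * π * Complex.I / n)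
  have hζ : ω ^ j ≠ 1 := by rwa [Ne, hω.pow_eq_one_iff_dvd]
  have hζn : (ω ^ j) ^ n = 1 := by rw [← pow_mul, mul_comm, pow_mul, hω.pow_eq_one, one_pow]
  have hre (m : ℕ) : ((ω ^ j) ^ m).re = cos (2 * π * j * m / n) := by
    rw [← pow_mul, ← Complex.exp_nat_mul, ← Complex.exp_ofReal_mul_I_re]
    congr 2
    push_cast
    ring
  have hgeom : ∑ m ∈ range n, (ω ^ j) ^ m = 0 := by
    rw [geom_sum_eq hζ, hζn, sub_self, zero_div]
  simpa only [Complex.re_sum, hre, Complex.zero_re] using congrArg Complex.re hgeom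

lemma sum_Ico_cos_two_pi_mul_div {n j : ℕ} (hj : 0 < j) (hjn : j < n) :
    ∑ m ∈ Ico 1 n, cos (2 * π * j * m / n) = -1 := by
  have h := sum_range_cos_two_pi_mul_div_eq_zero (Nat.not_dvd_of_pos_of_lt hj hjn)
  rw [range_eq_Ico, sum_eq_sum_Ico_succ_bot (by omega)] at h
  simp only [CharP.cast_eq_zero, mul_zero, zero_div, cos_zero] at h
  linarith

lemma sin_mul_pi_div_ne_zero {n m : ℕ} (hm : m ∈ Ico 1 n) : sin (m * π / n) ≠ 0 := by
  obtain ⟨hm1, hmn⟩ := mem_Ico.mp hm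
  have hn : (0 : ℝ) < n := by exact_mod_cast (show 0 < n by omega)
  refine (sin_pos_of_pos_of_lt_pi (by positivity) ?_).ne'
  rw [div_lt_iff₀ hn, mul_comm]
  exact mul_lt_mul_of_pos_left (by exact_mod_cast hmn) pi_pos

lemma one_sub_cos_two_mul_div_sin_sq {x : ℝ} (hx : sin x ≠ 0) :
    (1 - cos (2 * x)) / sin x ^ 2 = 2 := by
  rw [cos_two_mul, cos_sq']
  field_simp
  ring

lemma one_sub_cos_div_sin_sq_second_diff {x : ℝ} (hx : sin x ≠ 0) (a : ℝ) :
    (1 - cos (a + 2 * x)) / sin x ^ 2 - 2 * ((1 - cos a) / sin x ^ 2)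
      + (1 - cos (a - 2 * x)) / sin x ^ 2 = 4 * cos a := by
  have key : (1 - cos (a + 2 * x)) - 2 * (1 - cos a) + (1 - cos (a - 2 * x))
      = 4 * cos a * sin x ^ 2 := by
    rw [cos_add, cos_sub, cos_two_mul, cos_sq']
    ring
  calc _ = ((1 - cos (a + 2 * x)) - 2 * (1 - cos a) + (1 - cos (a - 2 * x))) / sin x ^ 2 := by
          ring
    _ = 4 * cos a := by rw [key]; field_simp

noncomputable def sumOneSubCosDivSinSq (n k : ℕ) : ℝ :=
  ∑ m ∈ Ico 1 n, (1 - cos (2 * π * k * m / n)) / sin (m * π / n) ^ 2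

lemma sumOneSubCosDivSinSq_one (n : ℕ) : sumOneSubCosDivSinSq n 1 = 2 * (n - 1 : ℕ) := by
  have hterm (m : ℕ) (hm : m ∈ Ico 1 n) :
      (1 - cos (2 * π * (1 : ℕ) * m / n)) / sin (m * π / n) ^ 2 = 2 := by
    rw [show 2 * π * ((1 : ℕ) : ℝ) * m / n = 2 * (m * π / n) by push_cast; ring]
    exact one_sub_cos_two_mul_div_sin_sq (sin_mul_pi_div_ne_zero hm)
  rw [sumOneSubCosDivSinSq, sum_congr rfl hterm, sum_const, Nat.card_Ico, nsmul_eq_mul, mul_comm]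

lemma sumOneSubCosDivSinSq_second_diff {n k : ℕ} (hk : k + 2 ≤ n) :
    sumOneSubCosDivSinSq n (k + 2) - 2 * sumOneSubCosDivSinSq n (k + 1)
      + sumOneSubCosDivSinSq n k = -4 := by
  have hterm (m : ℕ) (hm : m ∈ Ico 1 n) :
      (1 - cos (2 * π * (k + 2 : ℕ) * m / n)) / sin (m * π / n) ^ 2
        - 2 * ((1 - cos (2 * π * (k + 1 : ℕ) * m / n)) / sin (m * π / n) ^ 2)
        + (1 - cos (2 * π * k * m / n)) / sin (m * π / n) ^ 2
        = 4 * cos (2 * π * (k + 1 : ℕ) * m / n) := by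
    set a := 2 * π * ((k + 1 : ℕ) : ℝ) * m / n
    have hadd : 2 * π * ((k + 2 : ℕ) : ℝ) * m / n = a + 2 * (m * π / n) := by
      simp only [a]; push_cast; ring
    have hsub : 2 * π * (k : ℝ) * m / n = a - 2 * (m * π / n) := by
      simp only [a]; push_cast; ring
    rw [hadd, hsub, one_sub_cos_div_sin_sq_second_diff (sin_mul_pi_div_ne_zero hm)]
  simp only [sumOneSubCosDivSinSq, mul_sum, ← sum_sub_distrib, ← sum_add_distrib]
  rw [sum_congr rfl hterm, ← mul_sum, sum_Ico_cos_two_pi_mul_div (by omega) (by omega)]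
  norm_num

lemma eq_of_second_diff_eq {N : ℕ} {S T : ℕ → ℝ} (h0 : S 0 = T 0) (h1 : S 1 = T 1)
    (hstep : ∀ k, k + 2 ≤ N →
      S (k + 2) - 2 * S (k + 1) + S k = T (k + 2) - 2 * T (k + 1) + T k) :
    ∀ k ≤ N, S k = T k := by
  intro k hk
  induction k using Nat.strong_induction_on with
  | _ k ih =>
    match k with
    | 0 => exact h0
    | 1 => exact h1
    | k + 2 =>
      have := hstep k hk
      have := ih k (by omega) (by omega)
      have := ih (k + 1) (by omega) (by omega)
      linarith

theorem sum_one_sub_cos_div_sin_sq_general (n k : ℕ) (hk : k ≤ n) :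
    ∑ m ∈ Finset.Ico 1 n,
        (1 - Real.cos (2 * Real.pi * k * m / n)) / Real.sin (m * Real.pi / n) ^ 2 =
      2 * k * (n - k : ℝ) := by
  obtain rfl | hn := Nat.eq_zero_or_pos n
  · simp [Nat.le_zero.mp hk]
  refine eq_of_second_diff_eq (S := sumOneSubCosDivSinSq n) (T := fun k ↦ 2 * k * (n - k : ℝ))
    ?_ ?_ (fun k hk ↦ ?_) k hk
  · simp [sumOneSubCosDivSinSq]
  · rw [sumOneSubCosDivSinSq_one, Nat.cast_sub hn]
    push_cast
    ring
  · rw [sumOneSubCosDivSinSq_second_diff hk]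
    push_cast
    ring

theorem sum_one_sub_cos_div_sin_sq (n k : ℕ) (hn : 2 ≤ n) (hk : k ≤ n) :
    ∑ m ∈ Finset.Ico 1 n,
        (1 - Real.cos (2 * Real.pi * k * m / n)) / Real.sin (m * Real.pi / n) ^ 2 =
      2 * k * (n - k : ℝ) :=
  sum_one_sub_cos_div_sin_sq_general n k hk
end

section
/- Let n ≥ 2 and let M be the n×n real symmetric matrix with M_{ij} = −1/sin²((i−j)π/n) for i ≠ j and M_{ii} = Σ_{k≠i} 1/sin²((i−k)π/n). Then the eigenvalues of M are exactly {2k(n−k) : k = 0, 1, …, n−1} (with multiplicity). -/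
/-!
The Hessian is circulant, so the Fourier vectors `j ↦ ζ ^ (j k)`, `ζ = exp (2πi/n)`,
diagonalise it, with eigenvalues `λ_k = ∑_{d=1}^{n-1} (1 - ζ^{dk}) / sin² (dπ/n)`. Since
`(ζ^d - 1)² = -4 sin² (dπ/n) ζ^d`, the second difference `λ_k - 2λ_{k+1} + λ_{k+2}` equals
`4 ∑_{d=1}^{n-1} ζ^{d(k+1)} = -4`; together with `λ_0 = λ_n = 0` this forces `λ_k = 2k(n-k)`.
-/

open Complex Finset Matrix Polynomial
open scoped Real

theorem Fin.pow_val_add {M : Type*} [Monoid M] {x : M} {n : ℕ} (hx : x ^ n = 1) (a b : Fin n) :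
    x ^ ((a + b : Fin n) : ℕ) = x ^ (a : ℕ) * x ^ (b : ℕ) := by
  rw [Fin.val_add, ← pow_eq_pow_mod _ hx, pow_add]

theorem geom_sum_eq_zero_of_pow_eq_one_s12 {K : Type*} [Field K] {x : K} {n : ℕ} (hx : x ^ n = 1)
    (hx1 : x ≠ 1) : ∑ i ∈ range n, x ^ i = 0 := by
  have h := geom_sum_mul x n
  rw [hx, sub_self, mul_eq_zero] at h
  exact h.resolve_right (sub_ne_zero.mpr hx1)

namespace Matrix

variable {n : ℕ}

theorem circulant_transpose_mul_vandermonde {R : Type*} [CommRing R] [NeZero n] (c : Fin n → R)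
    {ζ : R} (hζ : ζ ^ n = 1) :
    (circulant c)ᵀ * vandermonde (fun j : Fin n => ζ ^ (j : ℕ)) =
      vandermonde (fun j : Fin n => ζ ^ (j : ℕ)) *
        diagonal (fun k : Fin n => ∑ d, c d * ζ ^ ((d : ℕ) * k)) := by
  ext i k
  rw [mul_apply, mul_diagonal, vandermonde_apply, Finset.mul_sum,
    ← Equiv.sum_comp (Equiv.addLeft i)]
  refine sum_congr rfl fun d _ => ?_
  rw [Equiv.coe_addLeft, transpose_apply, circulant_apply, add_sub_cancel_left, vandermonde_apply,
    Fin.pow_val_add hζ, pow_mul]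
  ring

theorem charpoly_circulant {K : Type*} [Field K] [NeZero n] {ζ : K} (hζ : IsPrimitiveRoot ζ n)
    (c : Fin n → K) :
    (circulant c).charpoly = ∏ k : Fin n, (X - C (∑ d, c d * ζ ^ ((d : ℕ) * k))) := by
  obtain ⟨V, hV⟩ : IsUnit (vandermonde fun j : Fin n => ζ ^ (j : ℕ)) := by
    rw [isUnit_iff_isUnit_det, isUnit_iff_ne_zero, det_vandermonde_ne_zero_iff]
    exact fun a b hab => Fin.ext (hζ.pow_inj a.isLt b.isLt hab)
  have hconj := circulant_transpose_mul_vandermonde c hζ.pow_eq_one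
  rw [← hV, ← Units.eq_mul_inv_iff_mul_eq] at hconj
  rw [← charpoly_transpose, hconj, charpoly_mul_comm, Units.inv_mul_cancel_left,
    charpoly_diagonal]

end Matrix

theorem Real.sin_sq_mul_pi_div_eq_of_modEq {n : ℕ} {a b : ℤ} (h : a ≡ b [ZMOD n]) :
    Real.sin (a * π / n) ^ 2 = Real.sin (b * π / n) ^ 2 := by
  rcases eq_or_ne n 0 with rfl | hn
  · simp
  obtain ⟨m, hm⟩ := h.dvd
  have hb : (b : ℝ) * π / n = a * π / n + m * π := by
    rw [show b = a + n * m by omega]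
    push_cast
    field_simp
  rw [hb, Real.sin_add_int_mul_pi, mul_pow, ← sq_abs ((-1 : ℝ) ^ m), abs_neg_one_zpow, one_pow,
    one_mul]

theorem Fin.sin_sq_val_sub_mul_pi_div {n : ℕ} (i j : Fin n) :
    Real.sin (((i - j : Fin n) : ℕ) * π / n) ^ 2 = Real.sin (((i : ℝ) - j) * π / n) ^ 2 := by
  have h : ((i - j : Fin n) : ℤ) ≡ (i : ℤ) - j [ZMOD n] := by
    rw [Fin.coe_int_sub_eq_mod]
    exact Int.mod_modEq _ _
  simpa using Real.sin_sq_mul_pi_div_eq_of_modEq h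

theorem Complex.exp_two_mul_mul_I_sub_one_sq (x : ℂ) :
    (exp (2 * x * I) - 1) ^ 2 = -4 * sin x ^ 2 * exp (2 * x * I) := by
  rw [exp_mul_I, cos_two_mul, sin_two_mul]
  linear_combination (4 * sin x ^ 2 * cos x ^ 2) * I_sq +
    (4 * (cos x ^ 2 - 1) + 8 * sin x * cos x * I) * sin_sq_add_cos_sq x

theorem eq_of_second_diff_eq_const {K : Type*} [Field K] [CharZero K] {f : ℕ → K} {c : K}
    {n : ℕ} (hdiff : ∀ k, k + 2 ≤ n → f k - 2 * f (k + 1) + f (k + 2) = c) (h0 : f 0 = 0)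
    (hn : f n = 0) {k : ℕ} (hk : k ≤ n) :
    f k = c / 2 * k * (k - n) := by
  set g : ℕ → K := fun k => f k - c / 2 * k * (k - n)
  have hlin : ∀ k, k ≤ n → g k = k * g 1 := by
    intro k
    induction k using Nat.twoStepInduction with
    | zero => simp [g, h0]
    | one => simp
    | more k ih₀ ih₁ =>
      intro hk
      have := hdiff k hk
      simp only [g] at ih₀ ih₁ ⊢
      push_cast at ih₀ ih₁ ⊢
      linear_combination this - ih₀ (by omega) + 2 * ih₁ (by omega)
  have hng : (n : K) * g 1 = 0 := by
    rw [← hlin n le_rfl]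
    simp [g, hn]
  rcases mul_eq_zero.mp hng with hn0 | hg1
  · obtain rfl : n = 0 := by exact_mod_cast hn0
    obtain rfl : k = 0 := by omega
    simp [h0]
  · have hgk := hlin k hk
    rw [hg1, mul_zero] at hgk
    linear_combination hgk

noncomputable def dysonHessianCoeff (n : ℕ) [NeZero n] (d : Fin n) : ℝ :=
  if d = 0 then ∑ e ∈ univ.erase (0 : Fin n), 1 / Real.sin ((e : ℕ) * π / n) ^ 2
  else -1 / Real.sin ((d : ℕ) * π / n) ^ 2

theorem dysonHessian_eq_circulant {n : ℕ} [NeZero n] {M : Matrix (Fin n) (Fin n) ℝ}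
    (hM : ∀ i j, M i j =
      if i = j then
        ∑ k ∈ univ.erase i, 1 / Real.sin (((i : ℕ) - (k : ℕ) : ℝ) * π / n) ^ 2
      else -1 / Real.sin (((i : ℕ) - (j : ℕ) : ℝ) * π / n) ^ 2) :
    M = circulant (dysonHessianCoeff n) := by
  ext i j
  rw [hM, circulant_apply, dysonHessianCoeff]
  by_cases hij : i = j
  · subst hij
    rw [if_pos rfl, if_pos (sub_self i)]
    refine sum_equiv (Equiv.subLeft i) (fun k => by simp [sub_eq_zero, eq_comm]) fun k _ => ?_
    rw [Equiv.subLeft_apply, Fin.sin_sq_val_sub_mul_pi_div]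
  · rw [if_neg hij, if_neg (sub_ne_zero.mpr hij), Fin.sin_sq_val_sub_mul_pi_div]

noncomputable def dysonEigenvalue (n : ℕ) [NeZero n] (k : ℕ) : ℂ :=
  ∑ d ∈ univ.erase (0 : Fin n),
    (1 - cexp (2 * π * I / n) ^ ((d : ℕ) * k)) / (Real.sin ((d : ℕ) * π / n) : ℂ) ^ 2

section dysonEigenvalue

variable {n : ℕ} [NeZero n]

theorem sum_dysonHessianCoeff_mul_pow (k : ℕ) :
    ∑ d : Fin n, (dysonHessianCoeff n d : ℂ) * cexp (2 * π * I / n) ^ ((d : ℕ) * k) =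
      dysonEigenvalue n k := by
  have hoff : ∀ d ∈ univ.erase (0 : Fin n),
      (dysonHessianCoeff n d : ℂ) * cexp (2 * π * I / n) ^ ((d : ℕ) * k) =
        -(cexp (2 * π * I / n) ^ ((d : ℕ) * k) / (Real.sin ((d : ℕ) * π / n) : ℂ) ^ 2) := by
    intro d hd
    rw [dysonHessianCoeff, if_neg (ne_of_mem_erase hd)]
    push_cast
    ring
  rw [← add_sum_erase _ _ (mem_univ 0), sum_congr rfl hoff, dysonHessianCoeff, if_pos rfl,
    dysonEigenvalue, sum_neg_distrib, ← sub_eq_add_neg]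
  push_cast
  rw [Fin.val_zero, zero_mul, pow_zero, mul_one, ← sum_sub_distrib]
  simp only [sub_div]

theorem dysonEigenvalue_zero : dysonEigenvalue n 0 = 0 := by
  simp [dysonEigenvalue]

theorem dysonEigenvalue_self : dysonEigenvalue n n = 0 := by
  simp [dysonEigenvalue, pow_mul', (isPrimitiveRoot_exp n (NeZero.ne n)).pow_eq_one]

theorem dysonEigenvalue_second_diff {k : ℕ} (hk : k + 2 ≤ n) :
    dysonEigenvalue n k - 2 * dysonEigenvalue n (k + 1) + dysonEigenvalue n (k + 2) = -4 := by
  set ζ := cexp (2 * π * I / n) with hζ_def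
  have hζ : IsPrimitiveRoot ζ n := isPrimitiveRoot_exp n (NeZero.ne n)
  have hterm : ∀ d ∈ univ.erase (0 : Fin n),
      (1 - ζ ^ ((d : ℕ) * k)) / (Real.sin ((d : ℕ) * π / n) : ℂ) ^ 2
        - 2 * ((1 - ζ ^ ((d : ℕ) * (k + 1))) / (Real.sin ((d : ℕ) * π / n) : ℂ) ^ 2)
        + (1 - ζ ^ ((d : ℕ) * (k + 2))) / (Real.sin ((d : ℕ) * π / n) : ℂ) ^ 2
        = 4 * (ζ ^ (k + 1)) ^ (d : ℕ) := by
    intro d hd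
    have hd0 : 0 < (d : ℕ) := Nat.pos_of_ne_zero (Fin.val_ne_zero_iff.mpr (ne_of_mem_erase hd))
    have hs : (Real.sin ((d : ℕ) * π / n) : ℂ) ≠ 0 := by
      have hn : (0 : ℝ) < n := Nat.cast_pos.mpr (NeZero.pos n)
      have hd : (0 : ℝ) < (d : ℕ) := Nat.cast_pos.mpr hd0
      refine ofReal_ne_zero.mpr (Real.sin_pos_of_pos_of_lt_pi (by positivity) ?_).ne'
      rw [div_lt_iff₀ hn, mul_comm]
      gcongr
      exact_mod_cast d.isLt
    have hw : ζ ^ (d : ℕ) = cexp (2 * ((d : ℕ) * π / n : ℝ) * I) := by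
      rw [hζ_def, ← exp_nat_mul]
      push_cast
      ring_nf
    have key := exp_two_mul_mul_I_sub_one_sq ((d : ℕ) * π / n : ℝ)
    rw [← hw, ← ofReal_sin] at key
    simp only [mul_add, pow_add, mul_one]
    rw [pow_mul ζ (d : ℕ) 2, ← pow_mul', pow_mul']
    field_simp
    linear_combination (-(ζ ^ (d : ℕ)) ^ k) * key
  have hgeom : ∑ d ∈ univ.erase (0 : Fin n), (ζ ^ (k + 1)) ^ (d : ℕ) = -1 := by
    have hsum : ∑ d : Fin n, (ζ ^ (k + 1)) ^ (d : ℕ) = 0 := by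
      rw [Fin.sum_univ_eq_sum_range (fun d => (ζ ^ (k + 1)) ^ d)]
      refine geom_sum_eq_zero_of_pow_eq_one_s12 ?_ (hζ.pow_ne_one_of_pos_of_lt (by omega) (by omega))
      rw [← pow_mul', pow_mul, hζ.pow_eq_one, one_pow]
    rw [← add_sum_erase _ _ (mem_univ 0), Fin.val_zero, pow_zero] at hsum
    linear_combination hsum
  rw [dysonEigenvalue, dysonEigenvalue, dysonEigenvalue, mul_sum, ← sum_sub_distrib,
    ← sum_add_distrib, sum_congr rfl hterm, ← mul_sum, hgeom]
  ring

theorem dysonEigenvalue_eq {k : ℕ} (hk : k ≤ n) : dysonEigenvalue n k = 2 * k * (n - k) := by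
  rw [eq_of_second_diff_eq_const (f := dysonEigenvalue n)
    (fun k hk => dysonEigenvalue_second_diff hk) dysonEigenvalue_zero dysonEigenvalue_self hk]
  ring

end dysonEigenvalue

open Polynomial in
/-- The Hessian of the Dyson potential at the equally spaced configuration has
eigenvalues `2k(n-k)`, `k = 0, …, n-1` (stated via the characteristic polynomial). -/
theorem eigenvalues_hessian_dyson (n : ℕ) (hn : 2 ≤ n)
    (M : Matrix (Fin n) (Fin n) ℝ)
    (hM : ∀ i j, M i j =
      if i = j then ∑ k ∈ Finset.univ.erase i,
          1 / Real.sin (((i : ℕ) - (k : ℕ) : ℝ) * Real.pi / n) ^ 2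
      else -1 / Real.sin (((i : ℕ) - (j : ℕ) : ℝ) * Real.pi / n) ^ 2) :
    M.charpoly = ∏ k ∈ Finset.range n, (X - C (2 * k * (n - k : ℝ))) := by
  have : NeZero n := ⟨by omega⟩
  apply map_injective ofRealHom ofReal_injective
  rw [← charpoly_map, dysonHessian_eq_circulant hM, map_circulant,
    charpoly_circulant (isPrimitiveRoot_exp n (NeZero.ne n)), Polynomial.map_prod,
    ← Fin.prod_univ_eq_prod_range]
  refine prod_congr rfl fun k _ => ?_
  simp only [ofRealHom_eq_coe, sum_dysonHessianCoeff_mul_pow, dysonEigenvalue_eq k.isLt.le]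
  simp
end

section
/- The Hessian of the function f(q_1,q_2,q_3) = −log sin(q_1−q_2) − log sin(q_1−q_3) − log sin(q_2−q_3) at the point (2π/3, π/3, 0) equals (4/3)(3I − J), where J is the 3×3 all-ones matrix; in particular its eigenvalues are 0, 4, 4. -/
/-!
Write `f q = ∑_α φ(α q)` over the positive roots `α` of `A₂`, with `φ = -log ∘ sin`. Since
`φ'' = 1 / sin²`, the Hessian of `f` is `∑_α α αᵀ / sin²(α q)`. At the equilibrium every `α q₀` is
`π/3` or `2π/3`, where `sin² = 3/4`, and `∑_α α αᵀ = 3I - J`.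
-/

open Filter Topology Real

section SecondDirectionalDerivative

variable {E : Type*} [NormedAddCommGroup E] [NormedSpace ℝ E]

theorem hasDerivAt_line (x v : E) : HasDerivAt (fun s : ℝ => x + s • v) v 0 := by
  simpa using ((hasDerivAt_id (0 : ℝ)).smul_const v).const_add x

theorem deriv_deriv_line_eq_of_hasFDerivAt {f : E → ℝ} {f' : E → E →L[ℝ] ℝ}
    {f'' : E →L[ℝ] E →L[ℝ] ℝ} {x : E} (u v : E)
    (hf : ∀ᶠ y in 𝓝 x, HasFDerivAt f (f' y) y) (hf' : HasFDerivAt f' f'' x) :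
    deriv (fun t : ℝ => deriv (fun s : ℝ => f (x + t • u + s • v)) 0) 0 = f'' u v := by
  have hxu : Tendsto (fun t : ℝ => x + t • u) (𝓝 0) (𝓝 x) := by
    simpa using (hasDerivAt_line x u).continuousAt.tendsto
  have hinner : (fun t : ℝ => deriv (fun s : ℝ => f (x + t • u + s • v)) 0)
      =ᶠ[𝓝 0] fun t => f' (x + t • u) v := by
    filter_upwards [hxu.eventually hf] with t ht
    exact (ht.comp_hasDerivAt_of_eq 0 (hasDerivAt_line _ v) (by simp)).deriv
  rw [hinner.deriv_eq]
  exact ((hf'.comp_hasDerivAt_of_eq 0 (hasDerivAt_line x u) (by simp)).clm_apply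
    (hasDerivAt_const 0 v)).deriv.trans (by simp)

theorem deriv_deriv_line_sum_comp_eq {ι : Type*} (s : Finset ι) (ℓ : ι → E →L[ℝ] ℝ)
    {φ φ' φ'' : ℝ → ℝ} {U : Set ℝ} (hU : IsOpen U)
    (hφ : ∀ y ∈ U, HasDerivAt φ (φ' y) y) (hφ' : ∀ y ∈ U, HasDerivAt φ' (φ'' y) y)
    {x : E} (hx : ∀ k ∈ s, ℓ k x ∈ U) (u v : E) :
    deriv (fun t : ℝ => deriv (fun r : ℝ => ∑ k ∈ s, φ (ℓ k (x + t • u + r • v))) 0) 0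
      = ∑ k ∈ s, φ'' (ℓ k x) * ℓ k u * ℓ k v := by
  have hnhds : ∀ᶠ y in 𝓝 x, ∀ k ∈ s, ℓ k y ∈ U :=
    (eventually_all_finset s).2 fun k hk =>
      (ℓ k).continuous.continuousAt.preimage_mem_nhds (hU.mem_nhds (hx k hk))
  have hf : ∀ᶠ y in 𝓝 x, HasFDerivAt (fun y => ∑ k ∈ s, φ (ℓ k y))
      (∑ k ∈ s, φ' (ℓ k y) • ℓ k) y := by
    filter_upwards [hnhds] with y hy
    exact HasFDerivAt.fun_sum fun k hk => (hφ _ (hy k hk)).comp_hasFDerivAt y (ℓ k).hasFDerivAt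
  have hf' : HasFDerivAt (fun y => ∑ k ∈ s, φ' (ℓ k y) • ℓ k)
      (∑ k ∈ s, (φ'' (ℓ k x) • ℓ k).smulRight (ℓ k)) x :=
    HasFDerivAt.fun_sum fun k hk =>
      ((hφ' _ (hx k hk)).comp_hasFDerivAt x (ℓ k).hasFDerivAt).smul_const (ℓ k)
  rw [deriv_deriv_line_eq_of_hasFDerivAt u v hf hf']
  simp [mul_comm]

end SecondDirectionalDerivative

theorem Real.hasDerivAt_neg_log_sin {x : ℝ} (hx : sin x ≠ 0) :
    HasDerivAt (fun y => -log (sin y)) (-(cos x / sin x)) x :=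
  ((hasDerivAt_sin x).log hx).neg

theorem Real.hasDerivAt_neg_cos_div_sin {x : ℝ} (hx : sin x ≠ 0) :
    HasDerivAt (fun y => -(cos y / sin y)) (1 / sin x ^ 2) x := by
  refine (((hasDerivAt_cos x).div (hasDerivAt_sin x) hx).neg).congr_deriv ?_
  field_simp
  linear_combination sin_sq_add_cos_sq x

def a2PositiveRoot : Fin 3 → (Fin 3 → ℝ) →L[ℝ] ℝ :=
  ![.proj 0 - .proj 1, .proj 0 - .proj 2, .proj 1 - .proj 2]

theorem sum_a2PositiveRoot_mul_a2PositiveRoot (i j : Fin 3) :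
    ∑ k, a2PositiveRoot k (Pi.single i 1) * a2PositiveRoot k (Pi.single j 1)
      = (if i = j then 3 else 0) - 1 := by
  fin_cases i <;> fin_cases j <;>
    simp [a2PositiveRoot, Fin.sum_univ_three, Matrix.cons_val] <;> norm_num

theorem sin_sq_a2PositiveRoot_equilibrium (k : Fin 3) :
    sin (a2PositiveRoot k ![2 * π / 3, π / 3, 0]) ^ 2 = 3 / 4 := by
  have h : sin (π / 3) ^ 2 = 3 / 4 := by
    rw [sin_pi_div_three, div_pow, sq_sqrt (by norm_num)]; norm_num
  have h' : sin (2 * π / 3) ^ 2 = 3 / 4 := by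
    rw [show 2 * π / 3 = π - π / 3 by ring, sin_pi_sub, h]
  fin_cases k <;> simp only [a2PositiveRoot, Fin.zero_eta, Fin.mk_one, Fin.reduceFinMk,
    Matrix.cons_val, sub_apply, ContinuousLinearMap.proj_apply, sub_zero]
  · rw [show 2 * π / 3 - π / 3 = π / 3 by ring, h]
  · exact h'
  · exact h

theorem charpoly_a2Hessian :
    (Matrix.of fun i j : Fin 3 => (4 / 3 : ℝ) * ((if i = j then 3 else 0) - 1)).charpoly
      = Polynomial.X * (Polynomial.X - Polynomial.C 4) ^ 2 := by
  rw [Matrix.charpoly, Matrix.det_fin_three]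
  refine Polynomial.funext fun x => ?_
  simp
  ring

/-- Hessian of the `A₂` Dyson potential at the equilibrium `(2π/3, π/3, 0)`
equals `(4/3)(3I - J)`; in particular its eigenvalues are `0, 4, 4`. -/
theorem hessian_dyson_A2 :
    let f : (Fin 3 → ℝ) → ℝ := fun q =>
      -Real.log (Real.sin (q 0 - q 1)) - Real.log (Real.sin (q 0 - q 2))
        - Real.log (Real.sin (q 1 - q 2))
    let q₀ : Fin 3 → ℝ := ![2 * Real.pi / 3, Real.pi / 3, 0]
    let H : Matrix (Fin 3) (Fin 3) ℝ := fun i j =>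
      (4 / 3) * ((if i = j then 3 else 0) - 1)
    (∀ i j : Fin 3,
        deriv (fun t : ℝ => deriv (fun s : ℝ => f (q₀ + t • (Pi.single i 1 : Fin 3 → ℝ) + s • (Pi.single j 1 : Fin 3 → ℝ))) 0) 0
          = H i j) ∧
      H.charpoly = Polynomial.X * (Polynomial.X - Polynomial.C 4) ^ 2 := by
  intro f q₀ H
  refine ⟨fun i j => ?_, charpoly_a2Hessian⟩
  have hf : f = fun q => ∑ k, -log (sin (a2PositiveRoot k q)) := by
    funext q
    simp only [f, Fin.sum_univ_three, a2PositiveRoot, Matrix.cons_val, sub_apply,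
      ContinuousLinearMap.proj_apply]
    ring
  have h34 : ∀ k, sin (a2PositiveRoot k q₀) ^ 2 = 3 / 4 := sin_sq_a2PositiveRoot_equilibrium
  have hU : IsOpen {y | sin y ≠ 0} := isOpen_ne_fun continuous_sin continuous_const
  have hq₀ : ∀ k ∈ Finset.univ, a2PositiveRoot k q₀ ∈ {y | sin y ≠ 0} := fun k _ h =>
    absurd (h34 k) (by rw [h]; norm_num)
  rw [hf, deriv_deriv_line_sum_comp_eq Finset.univ a2PositiveRoot hU
    (fun _ hy => hasDerivAt_neg_log_sin hy) (fun _ hy => hasDerivAt_neg_cos_div_sin hy) hq₀]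
  simp only [h34, mul_assoc, ← Finset.mul_sum, sum_a2PositiveRoot_mul_a2PositiveRoot, H]
  norm_num
end
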